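/- Let A be a finite d-regular graph, S ⊆ A, and define g_k(a) = Pr over k-step walks from a that all vertices lie in S, with ε_k = E_a[g_k(a)] and σ_k² = E_a[g_k²] − ε_k². Then for all k ≥ 2, σ_k² + ε_k² = ε_{2k−1}. -/
import Mathlib


open Finset

noncomputable def expec {V : Type*} [Fintype V] (f : V → ℝ) : ℝ :=
  (∑ a, f a) / (Fintype.card V : ℝ)

noncomputable def sdev {V : Type*} [Fintype V] (f : V → ℝ) : ℝ :=
  Real.sqrt (expec (fun a => f a ^ 2) - (expec f) ^ 2)

noncomputable def edgeE {V : Type*} [Fintype V] {d : ℕ} (N : V → Fin d → V)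
    (F : V → V → ℝ) : ℝ :=
  (∑ a, ∑ i, F a (N a i)) / ((Fintype.card V : ℝ) * d)

/-- `A` is a `lam`-expander in the mixing-lemma sense. -/
def IsExpander {V : Type*} [Fintype V] {d : ℕ} (N : V → Fin d → V) (lam : ℝ) : Prop :=
  ∀ f g : V → ℝ,
    |edgeE N (fun a a' => f a * g a') - expec f * expec g| ≤ lam * sdev f * sdev g

/-- The graph given by the rotation map `N` is undirected (the edge multiset is symmetric). -/
def SymmGraph {V : Type*} [Fintype V] {d : ℕ} (N : V → Fin d → V) : Prop :=
  ∀ F : V → V → ℝ, (∑ a, ∑ i, F a (N a i)) = ∑ a, ∑ i, F (N a i) a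

/-- Probability that a k-vertex walk started at `a` stays inside `S`. -/
noncomputable def gS {V : Type*} [DecidableEq V] {d : ℕ} (N : V → Fin d → V) (S : Finset V) :
    ℕ → V → ℝ
  | 0, _ => 1
  | k + 1, a => (if a ∈ S then (1 : ℝ) else 0) * ((∑ i, gS N S k (N a i)) / d)

lemma gS_absorb {V : Type*} [Fintype V] [DecidableEq V] {d : ℕ} (N : V → Fin d → V)
    (S : Finset V) (k : ℕ) (a : V) :
    gS N S (k + 1) a * (if a ∈ S then (1 : ℝ) else 0) = gS N S (k + 1) a := by
  by_cases h : a ∈ S <;> simp [gS, h]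

lemma gS_step {V : Type*} [Fintype V] [DecidableEq V] {d : ℕ}
    (N : V → Fin d → V) (hsymm : SymmGraph N) (S : Finset V) (j k : ℕ) :
    ∑ a, gS N S (j + 2) a * gS N S (k + 1) a
      = ∑ a, gS N S (j + 1) a * gS N S (k + 2) a := by
  have key := hsymm (fun x y => gS N S (j + 1) y * gS N S (k + 1) x)
  have L : ∑ a, gS N S (j + 2) a * gS N S (k + 1) a
      = (∑ a, ∑ i, gS N S (j + 1) (N a i) * gS N S (k + 1) a) / d := by
    rw [Finset.sum_div]
    refine Finset.sum_congr rfl fun a _ => ?_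
    show (if a ∈ S then (1:ℝ) else 0) * ((∑ i, gS N S (j+1) (N a i)) / d)
        * gS N S (k + 1) a = _
    rw [mul_comm ((if a ∈ S then (1:ℝ) else 0)) _, mul_assoc,
      mul_comm ((if a ∈ S then (1:ℝ) else 0)) _, gS_absorb,
      Finset.sum_div, Finset.sum_mul, Finset.sum_div]
    refine Finset.sum_congr rfl fun i _ => ?_
    ring
  have R : ∑ a, gS N S (j + 1) a * gS N S (k + 2) a
      = (∑ a, ∑ i, gS N S (j + 1) a * gS N S (k + 1) (N a i)) / d := by
    rw [Finset.sum_div]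
    refine Finset.sum_congr rfl fun a _ => ?_
    show gS N S (j + 1) a
        * ((if a ∈ S then (1:ℝ) else 0) * ((∑ i, gS N S (k+1) (N a i)) / d)) = _
    rw [← mul_assoc, gS_absorb, ← mul_div_assoc, Finset.mul_sum, Finset.sum_div]
  rw [L, R, key]

lemma gS_shift {V : Type*} [Fintype V] [DecidableEq V] {d : ℕ}
    (N : V → Fin d → V) (hsymm : SymmGraph N) (S : Finset V) :
    ∀ k j : ℕ, ∑ a, gS N S (j + 1) a * gS N S (k + 1) a
      = ∑ a, gS N S (j + k + 1) a * gS N S 1 a := by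
  intro k
  induction k with
  | zero => intro j; simp
  | succ k ih =>
      intro j
      have h1 := gS_step N hsymm S j k
      have h2 := ih (j + 1)
      rw [show j + (k + 1) + 1 = j + 1 + k + 1 by ring]
      rw [← h2, ← h1]

lemma gS_one {V : Type*} [Fintype V] [DecidableEq V] {d : ℕ} (hd : 0 < d)
    (N : V → Fin d → V) (S : Finset V) (a : V) :
    gS N S 1 a = (if a ∈ S then (1 : ℝ) else 0) := by
  show (if a ∈ S then (1:ℝ) else 0) * ((∑ _i : Fin d, (1:ℝ)) / d) = _
  have : ((d:ℝ)) ≠ 0 := Nat.cast_ne_zero.2 hd.ne'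
  simp [this]

/-- For the stay-in-S walk functional, σ_k² + ε_k² = E_a[g_k(a)²] equals ε_{2k-1}. -/
theorem stmt10 {V : Type*} [Fintype V] [DecidableEq V] [Nonempty V] {d : ℕ} (hd : 0 < d)
    (N : V → Fin d → V) (hsymm : SymmGraph N) (S : Finset V) :
    ∀ k : ℕ, 2 ≤ k →
      (sdev (gS N S k)) ^ 2 + (expec (gS N S k)) ^ 2 = expec (gS N S (2 * k - 1)) := by
  intro k hk
  set f := gS N S k with hf
  have hcard : (0:ℝ) < (Fintype.card V : ℝ) := by
    exact_mod_cast Fintype.card_pos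
  have hvar : 0 ≤ expec (fun a => f a ^ 2) - (expec f) ^ 2 := by
    unfold expec
    rw [sub_nonneg, div_pow, div_le_div_iff₀ (by positivity) hcard]
    calc (∑ a, f a) ^ 2 * (Fintype.card V : ℝ)
        ≤ (Fintype.card V : ℝ) * (∑ a, f a ^ 2) * (Fintype.card V : ℝ) := by
          have := sq_sum_le_card_mul_sum_sq (s := (Finset.univ : Finset V)) (f := f)
          apply mul_le_mul_of_nonneg_right _ hcard.le
          simpa using this
      _ = (∑ a, f a ^ 2) * (Fintype.card V : ℝ) ^ 2 := by ring
  have hsq : (sdev f) ^ 2 = expec (fun a => f a ^ 2) - (expec f) ^ 2 := by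
    unfold sdev
    exact Real.sq_sqrt hvar
  rw [hsq, sub_add_cancel]
  -- now: expec (fun a => f a ^ 2) = expec (gS N S (2*k-1))
  unfold expec
  congr 1
  obtain ⟨m, rfl⟩ : ∃ m, k = m + 2 := ⟨k - 2, by omega⟩
  have h1 : ∑ a, f a ^ 2 = ∑ a, gS N S (m + 2) a * gS N S (m + 2) a := by
    simp [hf, sq]
  rw [h1, show m + 2 = (m + 1) + 1 from rfl, gS_shift N hsymm S (m + 1) (m + 1)]
  have h2 : 2 * (m + 2) - 1 = m + 1 + (m + 1) + 1 := by omega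
  rw [h2]
  refine Finset.sum_congr rfl fun a _ => ?_
  rw [gS_one hd, gS_absorb]
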